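/- arXiv:0806.0651 — 3 statements merged into one kernel-verified Lean document; each statement's English description precedes it below -/
import Mathlib

section
/- Let A be an n×n matrix, B an n×m matrix, C an m×m invertible matrix over a field, let K be the (n+m)×(n+m) block matrix [[A, B],[Bᵀ, C]], and let Λ = A - BC⁻¹Bᵀ be the Schur complement of K with respect to C. Then for any injective maps p, q from a k-element index type into the row index type of A, det(Λ(p, q)) · det C = det(K(p ∪ I, q ∪ I)), where K(p ∪ I, q ∪ I) is the (k+m)×(k+m) submatrix of K whose rows are the rows p of the first block together with all m rows of the second block, and whose columns are the columns q of the first block together with all m columns of the second block. -/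
/-! Selecting rows `p ∪ I` and columns `q ∪ I` keeps the block shape:
`K(p ∪ I, q ∪ I) = [[A(p, q), B(p, ·)], [Bᵀ(·, q), C]]`. Expanding its determinant around the
invertible block `C` gives `det C` times the determinant of its Schur complement
`A(p, q) - B(p, ·) C⁻¹ Bᵀ(·, q)`, which is exactly `Λ(p, q)`. -/

open Matrix

namespace Matrix

variable {α : Type*} {l m n o l' m' n' o' : Type*}

theorem fromBlocks_submatrix_sum_map (A : Matrix n l α) (B : Matrix n m α) (C : Matrix o l α)
    (D : Matrix o m α) (f : n' → n) (g : o' → o) (f' : l' → l) (g' : m' → m) :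
    (fromBlocks A B C D).submatrix (Sum.map f g) (Sum.map f' g') =
      fromBlocks (A.submatrix f f') (B.submatrix f g') (C.submatrix g f') (D.submatrix g g') := by
  ext (i | i) (j | j) <;> rfl

theorem det_fromBlocks_submatrix_sum_map_id [CommRing α] [Fintype m] [DecidableEq m]
    [Fintype l] [DecidableEq l] (A : Matrix n n α) (B : Matrix n m α) (C : Matrix m n α)
    (D : Matrix m m α) (hD : IsUnit D.det) (p q : l → n) :
    ((fromBlocks A B C D).submatrix (Sum.map p id) (Sum.map q id)).det =
      D.det * ((A - B * D⁻¹ * C).submatrix p q).det := by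
  let := D.invertibleOfIsUnitDet hD
  rw [fromBlocks_submatrix_sum_map, submatrix_id_id, det_fromBlocks₂₂, invOf_eq_nonsing_inv,
    submatrix_sub, Pi.sub_apply, Pi.sub_apply, submatrix_mul _ _ p id q Function.bijective_id,
    submatrix_mul _ _ p id id Function.bijective_id, submatrix_id_id]

end Matrix

theorem det_schur_submatrix_mul_det_general {F : Type*} [Field F] {n m : Type*}
    [Fintype m] [DecidableEq m]
    (A : Matrix n n F) (B : Matrix n m F) (C : Matrix m m F) (hC : IsUnit C.det)
    {k : ℕ} (p q : Fin k → n) :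
    ((A - B * C⁻¹ * Bᵀ).submatrix p q).det * C.det =
      ((Matrix.fromBlocks A B Bᵀ C).submatrix
        (Sum.map p (id : m → m)) (Sum.map q (id : m → m))).det := by
  rw [det_fromBlocks_submatrix_sum_map_id A B Bᵀ C hC, mul_comm]

/-- For `A : n×n`, `B : n×m`, `C : m×m` invertible over a field, let
`K = [[A, B], [Bᵀ, C]]` and let `Λ = A - BC⁻¹Bᵀ` be the Schur complement.  For any
injective maps `p q : Fin k → n`, `det (Λ(p, q)) * det C = det (K(p ∪ I, q ∪ I))`,
where the combined selection `p ∪ I : Fin k ⊕ m → n ⊕ m` sends the first summand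
through `p` into the first block and the second summand identically into the second. -/
theorem det_schur_submatrix_mul_det {F : Type*} [Field F] {n m : Type*}
    [Fintype n] [Fintype m] [DecidableEq n] [DecidableEq m]
    (A : Matrix n n F) (B : Matrix n m F) (C : Matrix m m F) (hC : IsUnit C.det)
    {k : ℕ} (p q : Fin k → n) (hp : Function.Injective p) (hq : Function.Injective q) :
    ((A - B * C⁻¹ * Bᵀ).submatrix p q).det * C.det =
      ((Matrix.fromBlocks A B Bᵀ C).submatrix
        (Sum.map p (id : m → m)) (Sum.map q (id : m → m))).det :=
  det_schur_submatrix_mul_det_general A B C hC p q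
end

section
/- Let Λ be the Dirichlet-to-Neumann map of the lattice Kirchhoff matrix K with positive conductivities γ1,…,γ12 and interior block C. Then det(Λ({1,2},{5,6})) = -γ1·γ2·γ3·γ4·γ5·γ6 / det C, where Λ({1,2},{5,6}) is the 2×2 submatrix of Λ with rows 1,2 and columns 5,6. -/
open Matrix

/-- The endpoints of the 12 edges of the lattice network (0-based: vertex `v` of the
paper is `v - 1`, edge conductivity `γₖ` of the paper is `γ (k-1)`).  The edges are
{1,9}γ₁, {9,12}γ₂, {6,12}γ₃, {2,10}γ₄, {10,11}γ₅, {5,11}γ₆, {8,9}γ₇, {9,10}γ₈,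
{3,10}γ₉, {7,12}γ₁₀, {11,12}γ₁₁, {4,11}γ₁₂. -/
def edgeEnds : Fin 12 → Fin 12 × Fin 12 :=
  ![(0, 8), (8, 11), (5, 11), (1, 9), (9, 10), (4, 10),
    (7, 8), (8, 9), (2, 9), (6, 11), (10, 11), (3, 10)]

/-- The conductivity between vertices `i` and `j`: `γ e` if some edge `e` joins `i`
and `j`, and `0` otherwise. -/
def condWt (γ : Fin 12 → ℝ) (i j : Fin 12) : ℝ :=
  ∑ e : Fin 12, if edgeEnds e = (i, j) ∨ edgeEnds e = (j, i) then γ e else 0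

/-- The Kirchhoff matrix of the lattice network: `K i j = -γᵢⱼ` off the diagonal and
`K i i = ∑ⱼ γᵢⱼ` on the diagonal. -/
def kirchhoff (γ : Fin 12 → ℝ) : Matrix (Fin 12) (Fin 12) ℝ :=
  Matrix.of fun i j => if i = j then ∑ k : Fin 12, condWt γ i k else -condWt γ i j

/-- The boundary vertices (paper's vertices 1–8) as indices of `Fin 12`. -/
def bdV : Fin 8 → Fin 12 := Fin.castLE (by norm_num)

/-- The interior vertices (paper's vertices 9–12) as indices of `Fin 12`. -/
def intV : Fin 4 → Fin 12 := fun i => i.addNat 8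

/-- The boundary-boundary block `A` of the Kirchhoff matrix. -/
def blockA (γ : Fin 12 → ℝ) : Matrix (Fin 8) (Fin 8) ℝ := (kirchhoff γ).submatrix bdV bdV

/-- The boundary-interior block `B` of the Kirchhoff matrix. -/
def blockB (γ : Fin 12 → ℝ) : Matrix (Fin 8) (Fin 4) ℝ := (kirchhoff γ).submatrix bdV intV

/-- The interior-interior block `C` of the Kirchhoff matrix. -/
def blockC (γ : Fin 12 → ℝ) : Matrix (Fin 4) (Fin 4) ℝ := (kirchhoff γ).submatrix intV intV

/-- The Dirichlet-to-Neumann map `Λ = A - B C⁻¹ Bᵀ` of the lattice network. -/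
noncomputable def dtn (γ : Fin 12 → ℝ) : Matrix (Fin 8) (Fin 8) ℝ :=
  blockA γ - blockB γ * (blockC γ)⁻¹ * (blockB γ)ᵀ


/-!
Boundary vertices 1, 2, 5, 6 are pairwise non-adjacent and each has a single interior neighbour
(9, 10, 11, 12 respectively), so
`Λ({1,2},{5,6}) = -diag(γ₁, γ₄) C⁻¹({9,10},{11,12}) diag(γ₆, γ₃)`.
Jacobi's complementary minor identity gives
`det C⁻¹({9,10},{11,12}) = det C({9,10},{11,12}) / det C`, and
`C({9,10},{11,12}) = [[0, -γ₂], [-γ₅, 0]]`, the only edges between these pairs being `{9,12}`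
and `{10,11}`.
-/

namespace Matrix

/-- Jacobi's complementary minor identity for the `2 × 2` minors of a `4 × 4` matrix. -/
theorem det_adjugate_submatrix_fin_four {R : Type*} [CommRing R]
    (M : Matrix (Fin 4) (Fin 4) R) :
    (M.adjugate.submatrix ![0, 1] ![2, 3]).det = M.det * (M.submatrix ![0, 1] ![2, 3]).det := by
  rw [det_fin_two, det_fin_two, det_succ_row_zero]
  simp only [submatrix_apply, adjugate_fin_succ_eq_det_submatrix, det_fin_three, Fin.sum_univ_four]
  simp [Fin.succAbove]
  ring

theorem det_inv_submatrix_fin_four {K : Type*} [Field K] (M : Matrix (Fin 4) (Fin 4) K) :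
    (M⁻¹.submatrix ![0, 1] ![2, 3]).det = (M.submatrix ![0, 1] ![2, 3]).det / M.det := by
  rw [inv_def, submatrix_smul, Pi.smul_apply, Pi.smul_apply, det_smul,
    det_adjugate_submatrix_fin_four, Ring.inverse_eq_inv', Fintype.card_fin]
  -- valid also for `det M = 0`, where both sides are `0` because `0⁻¹ = 0`
  have hd : M.det * M.det⁻¹ * M.det⁻¹ = M.det⁻¹ := by
    simpa using inv_mul_mul_self M.det⁻¹
  linear_combination (M.submatrix ![0, 1] ![2, 3]).det * hd

theorem sub_mul_mul_transpose_apply_of_eq_single {m n R : Type*} [Fintype n] [DecidableEq n]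
    [CommRing R] {A : Matrix m m R} {B : Matrix m n R} (D : Matrix n n R) {i j : m} {p q : n}
    {a b : R} (hA : A i j = 0) (hi : B i = Pi.single p a) (hj : B j = Pi.single q b) :
    (A - B * D * Bᵀ) i j = -(a * D p q * b) := by
  simp [mul_apply, hA, hi, hj, Pi.single_apply]

end Matrix

open Matrix

section LatticeNetwork

variable (γ : Fin 12 → ℝ)

theorem kirchhoff_apply_of_ne {i j : Fin 12} (h : i ≠ j) : kirchhoff γ i j = -condWt γ i j := by
  simp [kirchhoff, h]

theorem eight_le_edgeEnds_snd (e : Fin 12) : 8 ≤ ((edgeEnds e).2 : ℕ) := by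
  revert e; decide

theorem condWt_bdV_bdV_eq_zero (i j : Fin 8) : condWt γ (bdV i) (bdV j) = 0 := by
  refine Finset.sum_eq_zero fun e _ => if_neg ?_
  have := eight_le_edgeEnds_snd e
  rintro (h | h) <;> rw [h] at this <;> simp [bdV] at this <;> omega

theorem blockA_apply_of_ne {i j : Fin 8} (h : i ≠ j) : blockA γ i j = 0 := by
  have hbd : bdV i ≠ bdV j := (Fin.castLE_injective _).ne h
  rw [blockA, submatrix_apply, kirchhoff_apply_of_ne _ hbd, condWt_bdV_bdV_eq_zero, neg_zero]

theorem blockB_eq : blockB γ = of ![Pi.single 0 (-γ 0), Pi.single 1 (-γ 3),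
    Pi.single 1 (-γ 8), Pi.single 2 (-γ 11), Pi.single 2 (-γ 5), Pi.single 3 (-γ 2),
    Pi.single 3 (-γ 9), Pi.single 0 (-γ 6)] := by
  ext i j
  have hne : bdV i ≠ intV j := by simp [bdV, intV, Fin.ext_iff]; omega
  rw [blockB, submatrix_apply, kirchhoff_apply_of_ne _ hne]
  fin_cases i <;> fin_cases j <;> simp [bdV, intV, condWt, Fin.sum_univ_succ, edgeEnds]

theorem blockC_submatrix_eq : (blockC γ).submatrix ![0, 1] ![2, 3] = !![0, -γ 1; -γ 4, 0] := by
  ext i j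
  rw [blockC, submatrix_apply, submatrix_apply, kirchhoff_apply_of_ne]
  · fin_cases i <;> fin_cases j <;> simp [intV, condWt, Fin.sum_univ_succ, edgeEnds]
  · fin_cases i <;> fin_cases j <;> decide

theorem dtn_submatrix_eq : (dtn γ).submatrix ![0, 1] ![4, 5] =
    -(diagonal ![γ 0, γ 3] * (blockC γ)⁻¹.submatrix ![0, 1] ![2, 3] *
      diagonal ![γ 5, γ 2]) := by
  ext i j
  rw [neg_apply, mul_diagonal, diagonal_mul, submatrix_apply, submatrix_apply, dtn]
  fin_cases i <;> fin_cases j <;>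
    rw [sub_mul_mul_transpose_apply_of_eq_single _ (blockA_apply_of_ne γ (by decide))
      (by rw [blockB_eq]; rfl) (by rw [blockB_eq]; rfl)] <;>
    simp

end LatticeNetwork

theorem det_dtn_12_56_general (γ : Fin 12 → ℝ) :
    ((dtn γ).submatrix ![0, 1] ![4, 5]).det =
      -(γ 0 * γ 1 * γ 2 * γ 3 * γ 4 * γ 5) / (blockC γ).det := by
  rw [dtn_submatrix_eq, det_neg, det_mul, det_mul, det_diagonal, det_diagonal,
    det_inv_submatrix_fin_four, blockC_submatrix_eq, det_fin_two_of]
  simp only [Fintype.card_fin, Fin.prod_univ_two, cons_val_zero, cons_val_one, cons_val_fin_one]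
  ring

/-- `det Λ({1,2},{5,6}) = -γ₁γ₂γ₃γ₄γ₅γ₆ / det C`
(0-based: rows 0,1 and columns 4,5 of `Λ`, conductivities `γ 0, …, γ 5`). -/
theorem det_dtn_12_56 (γ : Fin 12 → ℝ) (hγ : ∀ e, 0 < γ e) :
    ((dtn γ).submatrix ![0, 1] ![4, 5]).det =
      -(γ 0 * γ 1 * γ 2 * γ 3 * γ 4 * γ 5) / (blockC γ).det :=
  det_dtn_12_56_general γ
end

section
/- Let Λ be the Dirichlet-to-Neumann map of the lattice Kirchhoff matrix K with positive conductivities γ1,…,γ12 and interior block C. Then |det(Λ({1,2,7},{8,5,6}))| = γ1·γ3·γ4·γ5·γ6·γ7·γ10 / det C, where Λ({1,2,7},{8,5,6}) is the 3×3 submatrix of Λ with rows 1,2,7 and columns 8,5,6. -/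
open Matrix

/-!
The boundary vertices 1, 2, 7 and 8, 5, 6 are leaves, attached to the interior vertices
9, 10, 12 and 9, 11, 12 respectively, and no edge joins the two triples. Hence
`Λ({1,2,7},{8,5,6}) = -D₁ · C⁻¹({9,10,12},{9,11,12}) · D₂` with `D₁, D₂` the diagonal matrices
of the conductances of these leaf edges. By Jacobi's complementary minor theorem, this `3 × 3`
minor of `C⁻¹` is `-C(10,11) / det C = γ₅ / det C`. Finally `det C > 0`, because the quadratic
form of `C` is the sum of `(boundary conductance at i) · xᵢ²` and the energy of the interior
cycle 9–10–11–12, hence positive definite.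
-/

namespace Matrix

section Jacobi

variable {K : Type*} [Field K]

theorem adjugate_nonsing_inv {n : Type*} [Fintype n] [DecidableEq n] {A : Matrix n n K}
    (hA : A.det ≠ 0) : adjugate A⁻¹ = A.det⁻¹ • A :=
  calc adjugate A⁻¹ = A * (A⁻¹ * adjugate A⁻¹) := by
        rw [← Matrix.mul_assoc, mul_nonsing_inv _ (isUnit_iff_ne_zero.2 hA), Matrix.one_mul]
    _ = A.det⁻¹ • A := by
        rw [mul_adjugate, det_nonsing_inv, Ring.inverse_eq_inv', Matrix.mul_smul, Matrix.mul_one]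

theorem det_nonsing_inv_submatrix_succAbove {n : ℕ} {A : Matrix (Fin (n + 1)) (Fin (n + 1)) K}
    (hA : A.det ≠ 0) (i j : Fin (n + 1)) :
    (A⁻¹.submatrix i.succAbove j.succAbove).det = (-1) ^ (i + j : ℕ) * A j i / A.det := by
  have h := adjugate_fin_succ_eq_det_submatrix A⁻¹ j i
  rw [adjugate_nonsing_inv hA, smul_apply, smul_eq_mul] at h
  have hsign : ((-1 : K) ^ (i + j : ℕ)) ^ 2 = 1 := by rw [← pow_mul, mul_comm, pow_mul]; simp
  rw [div_eq_mul_inv]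
  linear_combination -(-1 : K) ^ (i + j : ℕ) * h -
    (A⁻¹.submatrix i.succAbove j.succAbove).det * hsign

end Jacobi

variable {l m n R : Type*} [Fintype n] [CommRing R]

theorem submatrix_sub_mul_mul_transpose (A : Matrix m m R) (B : Matrix m n R) (M : Matrix n n R)
    (r c : l → m) :
    (A - B * M * Bᵀ).submatrix r c =
      A.submatrix r c - B.submatrix r id * M * (B.submatrix c id)ᵀ := by
  ext i j
  simp [mul_apply]

theorem diagonal_mul_one_submatrix_mul_mul_transpose [Fintype l] [DecidableEq l] [DecidableEq n]
    (a b : l → R) (ρ σ : l → n) (M : Matrix n n R) :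
    diagonal a * (1 : Matrix n n R).submatrix ρ id * M *
        (diagonal b * (1 : Matrix n n R).submatrix σ id)ᵀ =
      diagonal a * M.submatrix ρ σ * diagonal b := by
  have hsel : (1 : Matrix n n R).submatrix ρ id * M * ((1 : Matrix n n R).submatrix σ id)ᵀ =
      M.submatrix ρ σ := by
    ext i j
    simp [mul_apply, one_apply]
  rw [transpose_mul, diagonal_transpose, ← hsel]
  simp only [Matrix.mul_assoc]

end Matrix

section Network

variable (γ : Fin 12 → ℝ)

theorem sum_condWt_eq_sum_incident (i : Fin 12) :
    ∑ k, condWt γ i k = ∑ e, if (edgeEnds e).1 = i ∨ (edgeEnds e).2 = i then γ e else 0 := by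
  unfold condWt
  rw [Finset.sum_comm]
  refine Finset.sum_congr rfl fun e _ => ?_
  have hloop : (edgeEnds e).1 ≠ (edgeEnds e).2 := by fin_cases e <;> decide
  generalize edgeEnds e = p at hloop ⊢
  obtain ⟨a, b⟩ := p
  simp only [Prod.mk.injEq] at hloop ⊢
  by_cases ha : a = i
  · subst ha
    simp [hloop, eq_comm]
  · by_cases hb : b = i
    · subst hb
      simp [ha]
    · simp [ha, hb]

theorem blockC_eq : blockC γ =
    !![γ 0 + γ 1 + γ 6 + γ 7, -γ 7, 0, -γ 1;
       -γ 7, γ 3 + γ 4 + γ 7 + γ 8, -γ 4, 0;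
       0, -γ 4, γ 4 + γ 5 + γ 10 + γ 11, -γ 10;
       -γ 1, 0, -γ 10, γ 1 + γ 2 + γ 9 + γ 10] := by
  ext i j
  fin_cases i <;> fin_cases j <;>
    simp (config := { decide := true }) only [blockC, kirchhoff, intV, submatrix_apply, of_apply,
      sum_condWt_eq_sum_incident, ite_true, ite_false] <;>
    simp (config := { decide := true }) only [condWt, Fin.sum_univ_succ, Fin.sum_univ_zero,
      edgeEnds, ite_true, ite_false] <;>
    simp only [Fin.isValue, Fin.succ_zero_eq_one, Fin.succ_one_eq_two, Fin.reduceSucc, Fin.zero_eta,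
      Fin.mk_one, Fin.reduceFinMk, add_zero, zero_add, neg_zero, cons_val', cons_val, cons_val_zero,
      cons_val_one, cons_val_fin_one] <;>
    ring

theorem blockC_one_two : blockC γ 1 2 = -γ 4 := by
  simp [blockC_eq]

variable {γ} in
theorem blockC_posDef (hγ : ∀ e, 0 < γ e) : (blockC γ).PosDef := by
  rw [posDef_iff_dotProduct_mulVec]
  refine ⟨?_, fun x hx => ?_⟩
  · rw [blockC_eq]
    ext i j
    fin_cases i <;> fin_cases j <;> simp
  set d : Fin 4 → ℝ := ![γ 0 + γ 6, γ 3 + γ 8, γ 5 + γ 11, γ 2 + γ 9]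
  have hd : ∀ i, 0 < d i := by
    intro i
    fin_cases i <;>
      simp only [d, Fin.zero_eta, Fin.mk_one, Fin.reduceFinMk, cons_val_zero, cons_val_one,
        cons_val] <;>
      linarith [hγ 0, hγ 2, hγ 3, hγ 5, hγ 6, hγ 8, hγ 9, hγ 11]
  have hquad : star x ⬝ᵥ (blockC γ *ᵥ x) = ∑ i, d i * x i ^ 2 +
      (γ 7 * (x 0 - x 1) ^ 2 + γ 4 * (x 1 - x 2) ^ 2 + γ 10 * (x 2 - x 3) ^ 2 +
        γ 1 * (x 0 - x 3) ^ 2) := by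
    simp only [dotProduct, Pi.star_apply, star_trivial, mulVec, blockC_eq, of_apply, cons_val',
      cons_val_fin_one, Fin.sum_univ_four, cons_val_zero, cons_val_one, cons_val, d]
    ring
  obtain ⟨i, hi⟩ := Function.ne_iff.1 hx
  have hboundary : 0 < ∑ i, d i * x i ^ 2 :=
    Finset.sum_pos' (fun j _ => by have := hd j; positivity)
      ⟨i, Finset.mem_univ i, mul_pos (hd i) (pow_two_pos_of_ne_zero hi)⟩
  have hcycle : 0 ≤ γ 7 * (x 0 - x 1) ^ 2 + γ 4 * (x 1 - x 2) ^ 2 + γ 10 * (x 2 - x 3) ^ 2 +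
      γ 1 * (x 0 - x 3) ^ 2 := by
    have := hγ 1; have := hγ 4; have := hγ 7; have := hγ 10
    positivity
  rw [hquad]
  linarith

theorem blockB_apply (i : Fin 8) (k : Fin 4) : blockB γ i k = -condWt γ (bdV i) (intV k) := by
  have hne : bdV i ≠ intV k := by simp [bdV, intV, Fin.ext_iff]; omega
  simp [blockB, kirchhoff, hne]

theorem blockB_submatrix_127 : (blockB γ).submatrix ![0, 1, 6] id =
    diagonal ![-γ 0, -γ 3, -γ 9] *
      (1 : Matrix (Fin 4) (Fin 4) ℝ).submatrix (Fin.succAbove 2) id := by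
  ext i k
  rw [submatrix_apply, blockB_apply, diagonal_mul, submatrix_apply]
  fin_cases i <;> fin_cases k <;>
    simp (config := { decide := true }) only [condWt, Fin.sum_univ_succ, Fin.sum_univ_zero,
      edgeEnds, ite_true, ite_false, one_apply] <;>
    simp

theorem blockB_submatrix_856 : (blockB γ).submatrix ![7, 4, 5] id =
    diagonal ![-γ 6, -γ 5, -γ 2] *
      (1 : Matrix (Fin 4) (Fin 4) ℝ).submatrix (Fin.succAbove 1) id := by
  ext i k
  rw [submatrix_apply, blockB_apply, diagonal_mul, submatrix_apply]
  fin_cases i <;> fin_cases k <;>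
    simp (config := { decide := true }) only [condWt, Fin.sum_univ_succ, Fin.sum_univ_zero,
      edgeEnds, ite_true, ite_false, one_apply] <;>
    simp

theorem blockA_submatrix_127_856 : (blockA γ).submatrix ![0, 1, 6] ![7, 4, 5] = 0 := by
  ext i j
  fin_cases i <;> fin_cases j <;>
    simp (config := { decide := true }) only [blockA, kirchhoff, bdV, submatrix_apply, of_apply,
      condWt, Fin.sum_univ_succ, Fin.sum_univ_zero, edgeEnds, ite_true, ite_false] <;>
    simp

theorem dtn_submatrix_127_856 :
    (dtn γ).submatrix ![0, 1, 6] ![7, 4, 5] =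
      -(diagonal ![-γ 0, -γ 3, -γ 9] *
          (blockC γ)⁻¹.submatrix (Fin.succAbove 2) (Fin.succAbove 1) *
        diagonal ![-γ 6, -γ 5, -γ 2]) := by
  rw [dtn, submatrix_sub_mul_mul_transpose, blockA_submatrix_127_856, blockB_submatrix_127,
    blockB_submatrix_856, diagonal_mul_one_submatrix_mul_mul_transpose, zero_sub]

theorem det_dtn_127_856 (hC : (blockC γ).det ≠ 0) :
    ((dtn γ).submatrix ![0, 1, 6] ![7, 4, 5]).det =
      -(γ 0 * γ 2 * γ 3 * γ 4 * γ 5 * γ 6 * γ 9) / (blockC γ).det := by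
  rw [dtn_submatrix_127_856, det_neg, det_mul, det_mul, det_diagonal, det_diagonal,
    det_nonsing_inv_submatrix_succAbove hC, blockC_one_two]
  simp only [Fintype.card_fin, Fin.prod_univ_three, cons_val_zero, cons_val_one, cons_val,
    Fin.coe_ofNat_eq_mod]
  ring

end Network

/-- `|det Λ({1,2,7},{8,5,6})| = γ₁γ₃γ₄γ₅γ₆γ₇γ₁₀ / det C`
(0-based: rows 0,1,6 and columns 7,4,5 of `Λ`). -/
theorem abs_det_dtn_127_856 (γ : Fin 12 → ℝ) (hγ : ∀ e, 0 < γ e) :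
    |((dtn γ).submatrix ![0, 1, 6] ![7, 4, 5]).det| =
      γ 0 * γ 2 * γ 3 * γ 4 * γ 5 * γ 6 * γ 9 / (blockC γ).det := by
  have hC := (blockC_posDef hγ).det_pos
  rw [det_dtn_127_856 γ hC.ne', abs_div, abs_neg, abs_of_pos hC]
  simp [abs_of_pos, hγ]
end
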